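/- arXiv:1611.06344 — 5 statements merged into one kernel-verified Lean document; each statement's English description precedes it below -/
import Mathlib

section
/- Let i ∈ {0,…,J}. For any (F_j)-supermartingale (Y_j)_{j=i,…,J} with Y_i = 0 almost surely and Y_j integrable for every j, and for any stopping time τ (with respect to (F_j)) taking values in {i,…,J}, one has E[Z_τ | F_i] ≤ E[max_{i≤j≤J}(Z_j − Y_j) | F_i] almost surely. -/
/-!
Extended by `0` before `i` and frozen at `Y J` after `J`, the process `Y` is a supermartingale on
all of `ℕ`; the crossing into time `i` is harmless because `Y i = 0` a.e. Optional sampling for it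
follows from the Doob decomposition `Y = N + A`, whose predictable part `A` is a.e. nonincreasing:
`E[Y_τ | F_i] ≤ E[N_τ + A_i | F_i] = N_i + A_i = Y_i = 0`. Since `Z_τ ≤ max_j (Z_j - Y_j) + Y_τ`
pointwise, conditioning on `F_i` gives the bound.
-/

open MeasureTheory ProbabilityTheory Filter

namespace MeasureTheory

variable {Ω : Type*} {m0 : MeasurableSpace Ω} {μ : Measure Ω} [IsFiniteMeasure μ]
  {ℱ : Filtration ℕ m0} {f : ℕ → Ω → ℝ} {τ : Ω → WithTop ℕ} {i n : ℕ}

theorem Submartingale.le_condExp_stoppedValue (hf : Submartingale f ℱ μ)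
    (hτ : IsStoppingTime ℱ τ) (hiτ : ∀ ω, i ≤ τ ω) (hτn : ∀ ω, τ ω ≤ n) :
    f i ≤ᵐ[μ] μ[stoppedValue f τ | ℱ i] := by
  set N := martingalePart f ℱ μ
  set A := predictablePart f ℱ μ
  have hfNA : f = N + A := (martingalePart_add_predictablePart ℱ μ f).symm
  have hN : Martingale N ℱ μ := martingale_martingalePart hf.stronglyAdapted hf.integrable
  have hNτ : N i =ᵐ[μ] μ[stoppedValue N τ | ℱ i] := by
    have := hN.stoppedValue_ae_eq_condExp_of_le hτ (isStoppingTime_const ℱ i) hiτ hτn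
    rwa [IsStoppingTime.measurableSpace_const] at this
  have hAτ : ∀ᵐ ω ∂μ, A i ω ≤ stoppedValue A τ ω := by
    filter_upwards [hf.monotone_predictablePart] with ω hω
    change A i ω ≤ A (τ ω).untopA ω
    obtain ⟨k, hk⟩ := WithTop.ne_top_iff_exists.mp ((hτn ω).trans_lt (WithTop.coe_lt_top n)).ne
    rw [← hk]
    exact hω (WithTop.coe_le_coe.mp (hk ▸ hiτ ω))
  have hNτint : Integrable (stoppedValue N τ) μ := integrable_stoppedValue ℕ hτ hN.integrable hτn
  have hAint : Integrable (A i) μ := integrable_finsetSum' _ fun k _ => integrable_condExp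
  calc f i = N i + A i := by rw [hfNA]; rfl
    _ =ᵐ[μ] μ[stoppedValue N τ | ℱ i] + μ[A i | ℱ i] := by
      rw [condExp_of_stronglyMeasurable (ℱ.le i) (stronglyAdapted_predictablePart' i) hAint]
      exact hNτ.add EventuallyEq.rfl
    _ =ᵐ[μ] μ[stoppedValue N τ + A i | ℱ i] := (condExp_add hNτint hAint _).symm
    _ ≤ᵐ[μ] μ[stoppedValue f τ | ℱ i] := by
      refine condExp_mono (hNτint.add hAint) (integrable_stoppedValue ℕ hτ hf.integrable hτn) ?_
      filter_upwards [hAτ] with ω hω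
      simp only [hfNA, stoppedValue, Pi.add_apply] at hω ⊢
      linarith

theorem Supermartingale.condExp_stoppedValue_le (hf : Supermartingale f ℱ μ)
    (hτ : IsStoppingTime ℱ τ) (hiτ : ∀ ω, i ≤ τ ω) (hτn : ∀ ω, τ ω ≤ n) :
    μ[stoppedValue f τ | ℱ i] ≤ᵐ[μ] f i := by
  filter_upwards [hf.neg.le_condExp_stoppedValue hτ hiτ hτn,
    condExp_neg (stoppedValue f τ) (ℱ i)] with ω hω hneg
  simp only [Pi.neg_apply] at hω hneg
  change -f i ω ≤ μ[-stoppedValue f τ | ℱ i] ω at hω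
  linarith

end MeasureTheory

section Extension

variable {Ω : Type*} {m0 : MeasurableSpace Ω}

def extendIcc (i J : ℕ) (Y : ℕ → Ω → ℝ) : ℕ → Ω → ℝ :=
  fun j => if j < i then 0 else Y (min j J)

theorem extendIcc_of_mem {i J j : ℕ} (Y : ℕ → Ω → ℝ) (hij : i ≤ j) (hjJ : j ≤ J) :
    extendIcc i J Y j = Y j := by
  simp [extendIcc, not_lt.mpr hij, min_eq_left hjJ]

theorem supermartingale_extendIcc {μ : Measure Ω} [IsFiniteMeasure μ] {ℱ : Filtration ℕ m0}
    {i J : ℕ} {Y : ℕ → Ω → ℝ} (hiJ : i ≤ J)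
    (hYadapted : ∀ j, i ≤ j → j ≤ J → StronglyMeasurable[ℱ j] (Y j))
    (hYint : ∀ j, i ≤ j → j ≤ J → Integrable (Y j) μ)
    (hYsuper : ∀ j k, i ≤ j → j ≤ k → k ≤ J → μ[Y k | ℱ j] ≤ᵐ[μ] Y j)
    (hYi : Y i =ᵐ[μ] 0) :
    Supermartingale (extendIcc i J Y) ℱ μ := by
  have hadapted : StronglyAdapted ℱ (extendIcc i J Y) := by
    intro j
    by_cases hji : j < i
    · simp only [extendIcc, if_pos hji]
      exact stronglyMeasurable_const
    · simp only [extendIcc, if_neg hji]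
      exact (hYadapted _ (le_min (not_lt.mp hji) hiJ) (min_le_right _ _)).mono
        (ℱ.mono (min_le_left _ _))
  have hint : ∀ j, Integrable (extendIcc i J Y j) μ := by
    intro j
    by_cases hji : j < i
    · simp only [extendIcc, if_pos hji]
      exact integrable_zero _ _ _
    · simp only [extendIcc, if_neg hji]
      exact hYint _ (le_min (not_lt.mp hji) hiJ) (min_le_right _ _)
  refine supermartingale_nat hadapted hint fun j => ?_
  rcases lt_or_ge j i with hji | hij
  · -- the step from `i - 1` to `i` is where `Y i = 0` a.e. is needed
    have hzero : extendIcc i J Y (j + 1) =ᵐ[μ] 0 := by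
      rcases (show j + 1 ≤ i from hji).lt_or_eq with hlt | heq
      · simp [extendIcc, hlt]
      · rw [heq, extendIcc_of_mem Y le_rfl hiJ]
        exact hYi
    refine (condExp_congr_ae hzero).le.trans ?_
    simp [extendIcc, hji, EventuallyLE.rfl]
  rcases lt_or_ge j J with hjJ | hJj
  · rw [extendIcc_of_mem Y (hij.trans j.le_succ) hjJ, extendIcc_of_mem Y hij hjJ.le]
    exact hYsuper j (j + 1) hij j.le_succ hjJ
  · have hfrozen : extendIcc i J Y (j + 1) = extendIcc i J Y j := by
      simp [extendIcc, not_lt.mpr hij, not_lt.mpr (hij.trans j.le_succ), hJj, hJj.trans j.le_succ]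
    rw [hfrozen, condExp_of_stronglyMeasurable (ℱ.le j) (hadapted j) (hint j)]

end Extension

theorem dual_upper_bound_supermartingale_general
    {Ω : Type*} {m0 : MeasurableSpace Ω} (P : Measure Ω) [IsProbabilityMeasure P]
    (J i : ℕ) (hiJ : i ≤ J) (ℱ : Filtration ℕ m0)
    (Z : ℕ → Ω → ℝ)
    (hZint : ∀ j, Integrable (Z j) P)
    (Y : ℕ → Ω → ℝ)
    (hYadapted : ∀ j, i ≤ j → j ≤ J → StronglyMeasurable[ℱ j] (Y j))
    (hYint : ∀ j, i ≤ j → j ≤ J → Integrable (Y j) P)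
    (hYsuper : ∀ j k, i ≤ j → j ≤ k → k ≤ J → P[Y k | ℱ j] ≤ᵐ[P] Y j)
    (hYi : Y i =ᵐ[P] 0)
    (τ : Ω → ℕ) (hτ : IsStoppingTime ℱ (fun ω => (τ ω : WithTop ℕ))) (hτi : ∀ ω, i ≤ τ ω) (hτJ : ∀ ω, τ ω ≤ J)
    (hMint : Integrable (fun ω =>
      (Finset.Icc i J).sup' (Finset.nonempty_Icc.2 hiJ) fun j => Z j ω - Y j ω) P) :
    P[fun ω => Z (τ ω) ω | ℱ i] ≤ᵐ[P]
      P[fun ω =>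
        (Finset.Icc i J).sup' (Finset.nonempty_Icc.2 hiJ) fun j => Z j ω - Y j ω | ℱ i] := by
  set M := fun ω => (Finset.Icc i J).sup' (Finset.nonempty_Icc.2 hiJ) fun j => Z j ω - Y j ω
  set Yτ := stoppedValue (extendIcc i J Y) fun ω => (τ ω : WithTop ℕ)
  have hτi' : ∀ ω, (i : WithTop ℕ) ≤ τ ω := fun ω => WithTop.coe_le_coe.2 (hτi ω)
  have hτJ' : ∀ ω, (τ ω : WithTop ℕ) ≤ J := fun ω => WithTop.coe_le_coe.2 (hτJ ω)
  have hY := supermartingale_extendIcc hiJ hYadapted hYint hYsuper hYi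
  have hYτ : P[Yτ | ℱ i] ≤ᵐ[P] 0 := by
    refine (hY.condExp_stoppedValue_le hτ hτi' hτJ').trans ?_
    rw [extendIcc_of_mem Y le_rfl hiJ]
    exact hYi.le
  have hZτ : (fun ω => Z (τ ω) ω) ≤ M + Yτ := fun ω => by
    have hmem : τ ω ∈ Finset.Icc i J := Finset.mem_Icc.2 ⟨hτi ω, hτJ ω⟩
    have hYτω : Yτ ω = Y (τ ω) ω := congrFun (extendIcc_of_mem Y (hτi ω) (hτJ ω)) ω
    have := Finset.le_sup' (fun j => Z j ω - Y j ω) hmem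
    simp only [Pi.add_apply, hYτω, M]
    linarith
  have hYτint : Integrable Yτ P := integrable_stoppedValue ℕ hτ hY.integrable hτJ'
  calc P[fun ω => Z (τ ω) ω | ℱ i] ≤ᵐ[P] P[M + Yτ | ℱ i] :=
        condExp_mono (integrable_stoppedValue ℕ hτ hZint hτJ') (hMint.add hYτint) (ae_of_all _ hZτ)
    _ =ᵐ[P] P[M | ℱ i] + P[Yτ | ℱ i] := condExp_add hMint hYτint _
    _ ≤ᵐ[P] P[M | ℱ i] := by
      filter_upwards [hYτ] with ω hω
      simpa using hω

/-- Duality inequality (1): for any supermartingale (Y_j)_{j=i,…,J} with Y_i = 0 a.s. and any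
stopping time τ with values in {i,…,J}, one has
E[Z_τ | F_i] ≤ E[max_{i≤j≤J}(Z_j − Y_j) | F_i] almost surely. -/
theorem dual_upper_bound_supermartingale
    {Ω : Type*} {m0 : MeasurableSpace Ω} (P : Measure Ω) [IsProbabilityMeasure P]
    (J i : ℕ) (hiJ : i ≤ J) (ℱ : Filtration ℕ m0)
    (Z : ℕ → Ω → ℝ)
    (hZadapted : Adapted ℱ Z)
    (hZnonneg : ∀ j ω, 0 ≤ Z j ω)
    (hZint : ∀ j, Integrable (Z j) P)
    (Y : ℕ → Ω → ℝ)
    (hYadapted : ∀ j, i ≤ j → j ≤ J → StronglyMeasurable[ℱ j] (Y j))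
    (hYint : ∀ j, i ≤ j → j ≤ J → Integrable (Y j) P)
    (hYsuper : ∀ j k, i ≤ j → j ≤ k → k ≤ J → P[Y k | ℱ j] ≤ᵐ[P] Y j)
    (hYi : Y i =ᵐ[P] 0)
    (τ : Ω → ℕ) (hτ : IsStoppingTime ℱ (fun ω => (τ ω : WithTop ℕ))) (hτi : ∀ ω, i ≤ τ ω) (hτJ : ∀ ω, τ ω ≤ J)
    (hMint : Integrable (fun ω =>
      (Finset.Icc i J).sup' (Finset.nonempty_Icc.2 hiJ) fun j => Z j ω - Y j ω) P) :
    P[fun ω => Z (τ ω) ω | ℱ i] ≤ᵐ[P]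
      P[fun ω =>
        (Finset.Icc i J).sup' (Finset.nonempty_Icc.2 hiJ) fun j => Z j ω - Y j ω | ℱ i] :=
  dual_upper_bound_supermartingale_general P J i hiJ ℱ Z hZint Y hYadapted hYint hYsuper hYi τ hτ
    hτi hτJ hMint
end

section
/- Fix i ∈ {0,…,J}. Define the discrete Snell envelope (U_j)_{j=i,…,J} by the backward recursion U_J = Z_J and U_j = max(Z_j, E[U_{j+1} | F_j]) for j = J−1,…,i, and define Y*_i = 0 and Y*_j = Σ_{l=i+1}^{j} (U_l − E[U_l | F_{l-1}]) for j = i+1,…,J. Then max_{i≤j≤J}(Z_j − Y*_j) = U_i almost surely. -/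
open MeasureTheory ProbabilityTheory

/-- Deterministic core of the duality identity: if `u J = z J` and
`u j = max (z j) (d (j+1))` for `i ≤ j < J`, then
`max_{i ≤ j ≤ J} (z j - ∑_{l=i+1}^j (u l - d l)) = u i`. -/
lemma snell_duality_aux (J i : ℕ) (hiJ : i ≤ J) (u z d : ℕ → ℝ)
    (hJ : u J = z J)
    (hrec : ∀ j, i ≤ j → j < J → u j = max (z j) (d (j + 1))) :
    (Finset.Icc i J).sup' (Finset.nonempty_Icc.2 hiJ)
      (fun j => z j - ∑ l ∈ Finset.Icc (i + 1) j, (u l - d l)) = u i := by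
  set S : ℕ → ℝ := fun j => ∑ l ∈ Finset.Icc (i + 1) j, (u l - d l) with hS
  set A : ℕ → ℝ := fun j => ∑ l ∈ Finset.Icc (i + 1) j, (u (l - 1) - d l) with hA
  -- key identity: u j - S j = u i - A j for j ≥ i
  have key : ∀ j, i ≤ j → u j - S j = u i - A j := by
    intro j hj
    induction j, hj using Nat.le_induction with
    | base =>
        simp [hS, hA, Finset.Icc_eq_empty_of_lt (Nat.lt_succ_self i)]
    | succ n hn ih =>
        have hSn : S (n + 1) = S n + (u (n + 1) - d (n + 1)) := by
          simp [hS, Finset.sum_Icc_succ_top (Nat.succ_le_succ hn)]; ring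
        have hAn : A (n + 1) = A n + (u n - d (n + 1)) := by
          simp [hA, Finset.sum_Icc_succ_top (Nat.succ_le_succ hn)]; ring
        rw [hSn, hAn]; linarith
  -- nonnegativity of A on [i, J]
  have hApos : ∀ j, j ≤ J → 0 ≤ A j := by
    intro j hjJ
    apply Finset.sum_nonneg
    intro l hl
    rw [Finset.mem_Icc] at hl
    have h1 : i ≤ l - 1 := by omega
    have h2 : l - 1 < J := by omega
    have h3 : l - 1 + 1 = l := by omega
    have := hrec (l - 1) h1 h2
    rw [h3] at this
    rw [this]
    simp [le_max_right]
  -- z j ≤ u j on [i, J]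
  have hzu : ∀ j, i ≤ j → j ≤ J → z j ≤ u j := by
    intro j hij hjJ
    rcases eq_or_lt_of_le hjJ with h | h
    · subst h; rw [hJ]
    · rw [hrec j hij h]; exact le_max_left _ _
  apply le_antisymm
  · apply Finset.sup'_le
    intro j hj
    rw [Finset.mem_Icc] at hj
    have := key j hj.1
    have := hApos j hj.2
    have := hzu j hj.1 hj.2
    linarith
  · -- witness: minimal j with u j = z j
    have hex : ∃ j, i ≤ j ∧ u j = z j := ⟨J, hiJ, hJ⟩
    classical
    set j0 := Nat.find hex with hj0
    obtain ⟨hij0, huz0⟩ := Nat.find_spec hex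
    have hj0J : j0 ≤ J := Nat.find_min' hex ⟨hiJ, hJ⟩
    have hAz : A j0 = 0 := by
      apply Finset.sum_eq_zero
      intro l hl
      rw [Finset.mem_Icc] at hl
      have h1 : i ≤ l - 1 := by omega
      have h2 : l - 1 < j0 := by omega
      have h3 : l - 1 + 1 = l := by omega
      have hne : ¬(i ≤ l - 1 ∧ u (l - 1) = z (l - 1)) := Nat.find_min hex h2
      have hne' : u (l - 1) ≠ z (l - 1) := fun h => hne ⟨h1, h⟩
      have := hrec (l - 1) h1 (lt_of_lt_of_le h2 hj0J)
      rw [h3] at this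
      have : u (l - 1) = d l := by
        rcases max_cases (z (l - 1)) (d l) with ⟨h, _⟩ | ⟨h, _⟩
        · exact absurd (this.trans h) hne'
        · exact this.trans h
      linarith
    have hval : z j0 - S j0 = u i := by
      have := key j0 hij0
      rw [hAz] at this
      linarith [huz0]
    calc u i = z j0 - S j0 := hval.symm
      _ ≤ _ := Finset.le_sup'
          (fun j => z j - ∑ l ∈ Finset.Icc (i + 1) j, (u l - d l))
          (Finset.mem_Icc.2 ⟨hij0, hj0J⟩)

/-- Almost sure duality identity (3): if (U_j)_{j=i,…,J} is the discrete Snell envelope of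
(Z_j) and Y*_j = Σ_{l=i+1}^{j} (U_l − E[U_l | F_{l-1}]) is the martingale part of its Doob
decomposition, then max_{i≤j≤J}(Z_j − Y*_j) = U_i almost surely. -/
theorem snell_envelope_as_duality
    {Ω : Type*} {m0 : MeasurableSpace Ω} (P : Measure Ω) [IsProbabilityMeasure P]
    (J i : ℕ) (hiJ : i ≤ J) (ℱ : Filtration ℕ m0)
    (Z : ℕ → Ω → ℝ)
    (hZadapted : Adapted ℱ Z)
    (hZnonneg : ∀ j ω, 0 ≤ Z j ω)
    (hZint : ∀ j, Integrable (Z j) P)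
    (U : ℕ → Ω → ℝ)
    (hUJ : U J =ᵐ[P] Z J)
    (hUrec : ∀ j, i ≤ j → j < J →
      U j =ᵐ[P] fun ω => max (Z j ω) ((P[U (j + 1) | ℱ j]) ω)) :
    (fun ω =>
      (Finset.Icc i J).sup' (Finset.nonempty_Icc.2 hiJ) fun j =>
        Z j ω - ∑ l ∈ Finset.Icc (i + 1) j, (U l ω - (P[U l | ℱ (l - 1)]) ω))
      =ᵐ[P] U i := by
  have hall : ∀ᵐ ω ∂P, ∀ j, i ≤ j → j < J →
      U j ω = max (Z j ω) ((P[U (j + 1) | ℱ j]) ω) := by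
    rw [ae_all_iff]
    intro j
    by_cases h : i ≤ j ∧ j < J
    · filter_upwards [hUrec j h.1 h.2] with ω hω _ _ using hω
    · filter_upwards with ω h1 h2 using absurd ⟨h1, h2⟩ h
  filter_upwards [hall, hUJ] with ω hrec hJω
  exact snell_duality_aux J i hiJ (fun j => U j ω) (fun j => Z j ω)
    (fun l => (P[U l | ℱ (l - 1)]) ω) hJω (fun j h1 h2 => by simpa using hrec j h1 h2)
end

section
/- The nested Monte Carlo early-exercise-premium estimator is biased high: E[U_{N,N_d}] ≥ U_0. -/
/-!
Given the outer paths, each inner sample `X_j^{(n_d,n)}` has law `P_j(X_{j-1}^{(n)}, ·)`, so the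
inner average `Z_{j,n,N_d}` has conditional mean `m_j(X_{j-1}^{(n)})`, where
`m_j(x) = ∫ v_j dP_j(x, ·)`. As `x ↦ x⁺` is convex and `g_{j-1}(X_{j-1}^{(n)})` is known given the
outer paths, conditional Jensen gives
`E[(g_{j-1}(X_{j-1}^{(n)}) - Z_{j,n,N_d})⁺] ≥ E[(g_{j-1}(X_{j-1}^{(n)}) - m_j(X_{j-1}^{(n)}))⁺]`,
and the right-hand side is the `j`-th term of `U_0` because every outer path has the law of the
chain. Summing over `j` and averaging over `n` gives the claim.
-/

open MeasureTheory ProbabilityTheory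

lemma MeasureTheory.Measure.integral_comp {α β E : Type*} {mα : MeasurableSpace α}
    {mβ : MeasurableSpace β} [NormedAddCommGroup E] [NormedSpace ℝ E] {μ : Measure α}
    {κ : Kernel α β} {f : β → E} (hf : Integrable f (κ ∘ₘ μ)) :
    ∫ y, f y ∂(κ ∘ₘ μ) = ∫ x, ∫ y, f y ∂κ x ∂μ := by
  rw [Measure.comp_eq_comp_const_apply] at hf ⊢
  rw [Kernel.integral_comp hf]
  simp

section Integrals

variable {Ω : Type*} {m mΩ : MeasurableSpace Ω} {μ : Measure Ω}

lemma integral_max_sub_condExp_le (hm : m ≤ mΩ) [SigmaFinite (μ.trim hm)] {a Z : Ω → ℝ}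
    (ha : StronglyMeasurable[m] a) (ha_int : Integrable a μ) (hZ : Integrable Z μ) :
    ∫ ω, max (a ω - μ[Z | m] ω) 0 ∂μ ≤ ∫ ω, max (a ω - Z ω) 0 ∂μ := by
  have hconvex : ConvexOn ℝ Set.univ fun x : ℝ => max x 0 :=
    (convexOn_id convex_univ).sup (convexOn_const 0 convex_univ)
  have hjensen := hconvex.map_condExp_le_univ hm
    (continuous_id.max continuous_const).lowerSemicontinuous (ha_int.sub hZ)
    (ha_int.sub hZ).pos_part
  have hsub : μ[a - Z | m] =ᵐ[μ] a - μ[Z | m] := by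
    simpa only [condExp_of_stronglyMeasurable hm ha ha_int] using condExp_sub ha_int hZ m
  calc ∫ ω, max (a ω - μ[Z | m] ω) 0 ∂μ
      ≤ ∫ ω, μ[(fun x => max x 0) ∘ (a - Z) | m] ω ∂μ := by
        refine integral_mono_ae (ha_int.sub integrable_condExp).pos_part integrable_condExp ?_
        filter_upwards [hjensen, hsub] with ω h1 h2
        rwa [Function.comp_apply, h2] at h1
    _ = ∫ ω, max (a ω - Z ω) 0 ∂μ := integral_condExp hm

lemma condExp_mean_eq {n : ℕ} (hn : n ≠ 0) {f : Fin n → Ω → ℝ} {g : Ω → ℝ}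
    (hf : ∀ i, Integrable (f i) μ) (h : ∀ i, μ[f i | m] =ᵐ[μ] g) :
    μ[fun ω => (n : ℝ)⁻¹ * ∑ i, f i ω | m] =ᵐ[μ] g := by
  have hmean : (fun ω => (n : ℝ)⁻¹ * ∑ i, f i ω) = (n : ℝ)⁻¹ • ∑ i, f i := by
    ext ω; simp
  rw [hmean]
  filter_upwards [condExp_smul (n : ℝ)⁻¹ (∑ i, f i) m,
    condExp_finsetSum (s := Finset.univ) (fun i _ => hf i) m, ae_all_iff.2 h] with ω h1 h2 h3
  simp only [h1, h2, h3, Pi.smul_apply, Finset.sum_apply, Finset.sum_const, Finset.card_univ,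
    Fintype.card_fin, nsmul_eq_mul, smul_eq_mul]
  field_simp

lemma le_integral_mean {n : ℕ} (hn : n ≠ 0) {f : Fin n → Ω → ℝ} {c : ℝ}
    (hf : ∀ i, Integrable (f i) μ) (h : ∀ i, c ≤ ∫ ω, f i ω ∂μ) :
    c ≤ ∫ ω, (n : ℝ)⁻¹ * ∑ i, f i ω ∂μ := by
  rw [integral_const_mul, integral_finsetSum _ fun i _ => hf i]
  calc c = (n : ℝ)⁻¹ * ∑ _i : Fin n, c := by
        rw [Finset.sum_const, Finset.card_univ, Fintype.card_fin, nsmul_eq_mul]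
        field_simp
    _ ≤ (n : ℝ)⁻¹ * ∑ i, ∫ ω, f i ω ∂μ := by gcongr with i; exact h i

lemma integral_add_sum_le_integral_add_sum {ι : Type*} {s : Finset ι} {a a' : Ω → ℝ}
    {b c : ι → Ω → ℝ} (ha : Integrable a μ) (ha' : Integrable a' μ)
    (hb : ∀ i ∈ s, Integrable (b i) μ) (hc : ∀ i ∈ s, Integrable (c i) μ)
    (haa' : ∫ ω, a ω ∂μ ≤ ∫ ω, a' ω ∂μ) (hbc : ∀ i ∈ s, ∫ ω, b i ω ∂μ ≤ ∫ ω, c i ω ∂μ) :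
    ∫ ω, (a ω + ∑ i ∈ s, b i ω) ∂μ ≤ ∫ ω, (a' ω + ∑ i ∈ s, c i ω) ∂μ := by
  rw [integral_add ha (integrable_finsetSum s hb), integral_add ha' (integrable_finsetSum s hc),
    integral_finsetSum s hb, integral_finsetSum s hc]
  exact add_le_add haa' (Finset.sum_le_sum hbc)

end Integrals

section CondLaw

variable {Ω E F : Type*} {m m' mΩ : MeasurableSpace Ω} [MeasurableSpace E] [MeasurableSpace F]

def HasCondLaw (Y : Ω → E) (κ : Kernel F E) (W : Ω → F) (μ : Measure Ω)
    (m : MeasurableSpace Ω) : Prop :=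
  ∀ A : Set E, MeasurableSet A →
    μ[fun ω => A.indicator (fun _ => (1 : ℝ)) (Y ω) | m] =ᵐ[μ] fun ω => (κ (W ω) A).toReal

variable {μ : Measure Ω} [IsFiniteMeasure μ] {Y : Ω → E} {W : Ω → F} {κ : Kernel F E}

lemma HasCondLaw.mono (h : HasCondLaw Y κ W μ m') (hmm' : m ≤ m') (hm' : m' ≤ mΩ) (hW : Measurable[m] W) :
    HasCondLaw Y κ W μ m := by
  intro A hA
  have hκA : StronglyMeasurable[m] fun ω => (κ (W ω) A).toReal :=
    ((κ.measurable_coe hA).comp hW).ennreal_toReal.stronglyMeasurable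
  calc μ[fun ω => A.indicator (fun _ => (1 : ℝ)) (Y ω) | m]
      =ᵐ[μ] μ[μ[fun ω => A.indicator (fun _ => (1 : ℝ)) (Y ω) | m'] | m] :=
        (condExp_condExp_of_le hmm' hm').symm
    _ =ᵐ[μ] μ[fun ω => (κ (W ω) A).toReal | m] := condExp_congr_ae (h A hA)
    _ = fun ω => (κ (W ω) A).toReal :=
        condExp_of_stronglyMeasurable (hmm'.trans hm') hκA (integrable_condExp.congr (h A hA))

variable [IsFiniteKernel κ] {v : E → ℝ}

namespace HasCondLaw

lemma measure_preimage_inter (h : HasCondLaw Y κ W μ m) (hm : m ≤ mΩ) (hY : Measurable Y)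
    (hW : Measurable W) {A : Set E} (hA : MeasurableSet A) {s : Set Ω}
    (hs : MeasurableSet[m] s) :
    μ (Y ⁻¹' A ∩ s) = ∫⁻ ω in s, κ (W ω) A ∂μ := by
  have hfin : ∫⁻ ω in s, κ (W ω) A ∂μ ≠ ⊤ :=
    (setLIntegral_lt_top_of_le_nnreal (measure_ne_top μ s) ⟨κ.bound.toNNReal, fun ω _ =>
      (κ.measure_le_bound _ _).trans (ENNReal.coe_toNNReal κ.bound_ne_top).ge⟩).ne
  have hind : Integrable (fun ω => A.indicator (fun _ => (1 : ℝ)) (Y ω)) μ :=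
    (integrable_const (1 : ℝ)).indicator (hY hA)
  rw [← ENNReal.toReal_eq_toReal_iff' (measure_ne_top μ _) hfin, ← measureReal_def,
    ← integral_toReal (f := fun ω => κ (W ω) A) ((κ.measurable_coe hA).comp hW).aemeasurable
      (ae_of_all _ fun _ => measure_lt_top _ _),
    ← measureReal_restrict_apply (hY hA), ← integral_indicator_one (hY hA)]
  exact (setIntegral_condExp hm hind hs).symm.trans
    (integral_congr_ae (ae_restrict_of_ae (h A hA)))

lemma map_restrict_eq_comp (h : HasCondLaw Y κ W μ m) (hm : m ≤ mΩ) (hY : Measurable Y)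
    (hW : Measurable W) {s : Set Ω} (hs : MeasurableSet[m] s) :
    (μ.restrict s).map Y = κ ∘ₘ (μ.restrict s).map W := by
  ext A hA
  rw [Measure.map_apply hY hA, Measure.restrict_apply (hY hA),
    Measure.bind_apply hA κ.aemeasurable, lintegral_map (κ.measurable_coe hA) hW]
  exact h.measure_preimage_inter hm hY hW hA hs

lemma map_eq_comp (h : HasCondLaw Y κ W μ m) (hm : m ≤ mΩ) (hY : Measurable Y)
    (hW : Measurable W) : μ.map Y = κ ∘ₘ μ.map W := by
  simpa using h.map_restrict_eq_comp hm hY hW MeasurableSet.univ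

lemma identDistrib {Y' : Ω → E} {W' : Ω → F}
    (h : HasCondLaw Y κ W μ m) (h' : HasCondLaw Y' κ W' μ m') (hm : m ≤ mΩ) (hm' : m' ≤ mΩ)
    (hY : Measurable Y) (hY' : Measurable Y') (hW : Measurable W) (hW' : Measurable W')
    (hWW' : IdentDistrib W W' μ μ) :
    IdentDistrib Y Y' μ μ where
  aemeasurable_fst := hY.aemeasurable
  aemeasurable_snd := hY'.aemeasurable
  map_eq := by
    rw [h.map_eq_comp hm hY hW, h'.map_eq_comp hm' hY' hW', hWW'.map_eq]

lemma integrable_integral (h : HasCondLaw Y κ W μ m) (hm : m ≤ mΩ) (hY : Measurable Y)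
    (hW : Measurable W) (hv : Measurable v) (hvY : Integrable (fun ω => v (Y ω)) μ) :
    Integrable (fun ω => ∫ y, v y ∂κ (W ω)) μ := by
  have hv_comp : Integrable v (κ ∘ₘ μ.map W) := by
    rw [← h.map_eq_comp hm hY hW]
    exact (integrable_map_measure hv.aestronglyMeasurable hY.aemeasurable).2 hvY
  have hmean : Integrable (fun x => ∫ y, v y ∂κ x) (μ.map W) :=
    ((Measure.integrable_comp_iff hv_comp.1).1 hv_comp).2.mono
      hv.stronglyMeasurable.integral_kernel.aestronglyMeasurable
      (ae_of_all _ fun x => (norm_integral_le_integral_norm _).trans (Real.le_norm_self _))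
  exact (integrable_map_measure hv.stronglyMeasurable.integral_kernel.aestronglyMeasurable
    hW.aemeasurable).1 hmean

lemma setIntegral_eq (h : HasCondLaw Y κ W μ m) (hm : m ≤ mΩ) (hY : Measurable Y)
    (hW : Measurable W) (hv : Measurable v) (hvY : Integrable (fun ω => v (Y ω)) μ) {s : Set Ω}
    (hs : MeasurableSet[m] s) :
    ∫ ω in s, v (Y ω) ∂μ = ∫ ω in s, ∫ y, v y ∂κ (W ω) ∂μ := by
  have hmap := h.map_restrict_eq_comp hm hY hW hs
  have hv_comp : Integrable v (κ ∘ₘ (μ.restrict s).map W) := by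
    rw [← hmap]
    exact (integrable_map_measure hv.aestronglyMeasurable hY.aemeasurable).2 hvY.restrict
  rw [← integral_map hY.aemeasurable hv.aestronglyMeasurable, hmap,
    Measure.integral_comp hv_comp,
    integral_map hW.aemeasurable hv.stronglyMeasurable.integral_kernel.aestronglyMeasurable]

lemma condExp_eq (h : HasCondLaw Y κ W μ m) (hm : m ≤ mΩ) (hY : Measurable Y)
    (hW : Measurable[m] W) (hv : Measurable v) (hvY : Integrable (fun ω => v (Y ω)) μ) :
    μ[fun ω => v (Y ω) | m] =ᵐ[μ] fun ω => ∫ y, v y ∂κ (W ω) := by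
  have hW' : Measurable W := hW.mono hm le_rfl
  refine (ae_eq_condExp_of_forall_setIntegral_eq hm hvY
    (fun s _ _ => (h.integrable_integral hm hY hW' hv hvY).integrableOn)
    (fun s hs _ => (h.setIntegral_eq hm hY hW' hv hvY hs).symm)
    (hv.stronglyMeasurable.integral_kernel.comp_measurable hW).aestronglyMeasurable).symm

end HasCondLaw

lemma integral_max_sub_integral_kernel_le {n : ℕ} (hn : n ≠ 0) {Ξ : Fin n → Ω → E}
    (hΞ : ∀ i, HasCondLaw (Ξ i) κ W μ m) (hm : m ≤ mΩ) (hΞm : ∀ i, Measurable (Ξ i))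
    (hW : Measurable[m] W) (hv : Measurable v) (hvΞ : ∀ i, Integrable (fun ω => v (Ξ i ω)) μ)
    {a : Ω → ℝ} (ha : StronglyMeasurable[m] a) (ha_int : Integrable a μ) :
    ∫ ω, max (a ω - ∫ y, v y ∂κ (W ω)) 0 ∂μ
      ≤ ∫ ω, max (a ω - (n : ℝ)⁻¹ * ∑ i, v (Ξ i ω)) 0 ∂μ := by
  have hcond : μ[fun ω => (n : ℝ)⁻¹ * ∑ i, v (Ξ i ω) | m] =ᵐ[μ] fun ω => ∫ y, v y ∂κ (W ω) :=
    condExp_mean_eq hn hvΞ fun i => (hΞ i).condExp_eq hm (hΞm i) hW hv (hvΞ i)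
  calc ∫ ω, max (a ω - ∫ y, v y ∂κ (W ω)) 0 ∂μ
      = ∫ ω, max (a ω - μ[fun ω => (n : ℝ)⁻¹ * ∑ i, v (Ξ i ω) | m] ω) 0 ∂μ :=
        integral_congr_ae (hcond.mono fun ω hω => by simp only [hω])
    _ ≤ _ := integral_max_sub_condExp_le hm ha ha_int
        ((integrable_finsetSum _ fun i _ => hvΞ i).const_mul _)

end CondLaw

section NestedEstimator

variable {Ω E : Type*} {m mΩ : MeasurableSpace Ω} {μ : Measure Ω} {g v : ℕ → E → ℝ} {J n : ℕ}

/-- The summand of `U_{N,N_d}` belonging to the outer path `Y` with inner samples `Ξ`. -/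
noncomputable def nestedEEPPathwise (g v : ℕ → E → ℝ) (J : ℕ) {n : ℕ} (Y : ℕ → Ω → E)
    (Ξ : Fin n → ℕ → Ω → E) (ω : Ω) : ℝ :=
  g J (Y J ω) + ∑ l ∈ Finset.Icc 1 J,
    max (g (l - 1) (Y (l - 1) ω) - (n : ℝ)⁻¹ * ∑ i, v l (Ξ i l ω)) 0

lemma integrable_max_sub_mean {a : Ω → ℝ} {f : Fin n → Ω → ℝ} (ha : Integrable a μ)
    (hf : ∀ i, Integrable (f i) μ) :
    Integrable (fun ω => max (a ω - (n : ℝ)⁻¹ * ∑ i, f i ω) 0) μ :=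
  (ha.sub ((integrable_finsetSum _ fun i _ => hf i).const_mul _)).pos_part

variable {Y : ℕ → Ω → E} {Ξ : Fin n → ℕ → Ω → E}

lemma integrable_nestedEEPPathwise (hgY : ∀ j ≤ J, Integrable (fun ω => g j (Y j ω)) μ)
    (hvΞ : ∀ i l, 1 ≤ l → l ≤ J → Integrable (fun ω => v l (Ξ i l ω)) μ) :
    Integrable (nestedEEPPathwise g v J Y Ξ) μ := by
  refine (hgY J le_rfl).add (integrable_finsetSum _ fun l hl => ?_)
  obtain ⟨hl1, hlJ⟩ := Finset.mem_Icc.1 hl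
  exact integrable_max_sub_mean (hgY (l - 1) (by omega)) fun i => hvΞ i l hl1 hlJ

variable [MeasurableSpace E] {κ : ℕ → Kernel E E}

/-- The integrand of `U_0`. -/
noncomputable def eepPathwise (κ : ℕ → Kernel E E) (g v : ℕ → E → ℝ) (J : ℕ) (X : ℕ → Ω → E)
    (ω : Ω) : ℝ :=
  g J (X J ω) + ∑ l ∈ Finset.Icc 1 J,
    max (g (l - 1) (X (l - 1) ω) - ∫ y, v l y ∂(κ l (X (l - 1) ω))) 0

lemma integral_eepPathwise_le_integral_nestedEEPPathwise [IsFiniteMeasure μ]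
    [∀ l, IsFiniteKernel (κ l)] (hn : n ≠ 0) {X : ℕ → Ω → E} (hm : m ≤ mΩ)
    (hgm : ∀ j, Measurable (g j)) (hvm : ∀ l, Measurable (v l))
    (hYm : ∀ j ≤ J, Measurable[m] (Y j)) (hΞm : ∀ i l, Measurable (Ξ i l))
    (hYX : ∀ j ≤ J, IdentDistrib (Y j) (X j) μ μ)
    (hΞ : ∀ i l, 1 ≤ l → l ≤ J → HasCondLaw (Ξ i l) (κ l) (Y (l - 1)) μ m)
    (hgY : ∀ j ≤ J, Integrable (fun ω => g j (Y j ω)) μ)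
    (hvΞ : ∀ i l, 1 ≤ l → l ≤ J → Integrable (fun ω => v l (Ξ i l ω)) μ) :
    ∫ ω, eepPathwise κ g v J X ω ∂μ ≤ ∫ ω, nestedEEPPathwise g v J Y Ξ ω ∂μ := by
  have hterm_meas : ∀ l, Measurable fun x => max (g (l - 1) x - ∫ y, v l y ∂(κ l x)) 0 :=
    fun l => ((hgm _).sub (hvm l).stronglyMeasurable.integral_kernel.measurable).max
      measurable_const
  have hterm_ident : ∀ l ∈ Finset.Icc 1 J,
      IdentDistrib (fun ω => max (g (l - 1) (Y (l - 1) ω) - ∫ y, v l y ∂(κ l (Y (l - 1) ω))) 0)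
        (fun ω => max (g (l - 1) (X (l - 1) ω) - ∫ y, v l y ∂(κ l (X (l - 1) ω))) 0) μ μ :=
    fun l hl => (hYX (l - 1) (by grind)).comp (hterm_meas l)
  have hterm_int : ∀ l ∈ Finset.Icc 1 J,
      Integrable
        (fun ω => max (g (l - 1) (Y (l - 1) ω) - ∫ y, v l y ∂(κ l (Y (l - 1) ω))) 0) μ := by
    intro l hl
    obtain ⟨hl1, hlJ⟩ := Finset.mem_Icc.1 hl
    have hY' : Measurable (Y (l - 1)) := (hYm (l - 1) (by omega)).mono hm le_rfl
    exact ((hgY (l - 1) (by omega)).sub ((hΞ ⟨0, by omega⟩ l hl1 hlJ).integrable_integral hm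
      (hΞm _ l) hY' (hvm l) (hvΞ _ l hl1 hlJ))).pos_part
  have hgJ := (hYX J le_rfl).comp (hgm J)
  refine integral_add_sum_le_integral_add_sum (hgJ.integrable_iff.1 (hgY J le_rfl))
    (hgY J le_rfl) (fun l hl => (hterm_ident l hl).integrable_iff.1 (hterm_int l hl))
    (fun l hl => ?_) hgJ.integral_eq.ge fun l hl => ?_
  all_goals obtain ⟨hl1, hlJ⟩ := Finset.mem_Icc.1 hl
  · exact integrable_max_sub_mean (hgY (l - 1) (by omega)) fun i => hvΞ i l hl1 hlJ
  · rw [← (hterm_ident l hl).integral_eq]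
    exact integral_max_sub_integral_kernel_le hn (fun i => hΞ i l hl1 hlJ) hm
      (fun i => hΞm i l) (hYm (l - 1) (by omega)) (hvm l) (fun i => hvΞ i l hl1 hlJ)
      ((hgm _).comp (hYm (l - 1) (by omega))).stronglyMeasurable (hgY (l - 1) (by omega))

end NestedEstimator

section PathSigmaAlgebra

variable {Ω E ι : Type*} {mΩ : MeasurableSpace Ω} [MeasurableSpace E] {Y : ι → ℕ → Ω → E}
  {J : ℕ}

abbrev pathSigmaAlgebra (Y : ι → ℕ → Ω → E) (J : ℕ) : MeasurableSpace Ω :=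
  ⨆ (i : ι) (j ∈ Finset.range (J + 1)), MeasurableSpace.comap (Y i j) inferInstance

lemma pathSigmaAlgebra_le (hY : ∀ i j, Measurable (Y i j)) : pathSigmaAlgebra Y J ≤ mΩ :=
  iSup₂_le fun i j => iSup_le fun _ => (hY i j).comap_le

lemma measurable_pathSigmaAlgebra (i : ι) {j : ℕ} (hj : j ≤ J) :
    Measurable[pathSigmaAlgebra Y J] (Y i j) :=
  measurable_iff_comap_le.2 <|
    le_iSup₂_of_le (f := fun _ j => ⨆ (_ : j ∈ Finset.range (J + 1)), _) i j <|
      le_iSup_of_le (Finset.mem_range.2 (Nat.lt_succ_of_le hj)) le_rfl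

lemma identDistrib_of_map_path_eq {μ : Measure Ω} {X X' : ℕ → Ω → E}
    (hX : ∀ j, Measurable (X j)) (hX' : ∀ j, Measurable (X' j))
    (h : μ.map (fun ω (j : Fin (J + 1)) => X j ω) = μ.map (fun ω (j : Fin (J + 1)) => X' j ω))
    {j : ℕ} (hj : j ≤ J) : IdentDistrib (X j) (X' j) μ μ :=
  (IdentDistrib.mk (measurable_pi_iff.2 fun (j : Fin (J + 1)) => hX j).aemeasurable
    (measurable_pi_iff.2 fun (j : Fin (J + 1)) => hX' j).aemeasurable h).comp
    (measurable_pi_apply (⟨j, Nat.lt_succ_of_le hj⟩ : Fin (J + 1)))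

end PathSigmaAlgebra

theorem nested_eep_estimator_biased_high_general
    {Ω : Type*} {mΩ : MeasurableSpace Ω} (P : Measure Ω) [IsProbabilityMeasure P]
    (d J N Nd : ℕ) (hN : 1 ≤ N) (hNd : 1 ≤ Nd)
    -- the Markov chain
    (X : ℕ → Ω → (Fin d → ℝ)) (hXm : ∀ j, Measurable (X j))
    (κ : ℕ → Kernel (Fin d → ℝ) (Fin d → ℝ)) (hκ : ∀ l, IsMarkovKernel (κ l))
    (hMarkov : ∀ l, 1 ≤ l → l ≤ J → ∀ A : Set (Fin d → ℝ), MeasurableSet A →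
      (P[fun ω => A.indicator (fun _ => (1 : ℝ)) (X l ω) |
          ⨆ i ∈ Finset.range l, MeasurableSpace.comap (X i) inferInstance])
        =ᵐ[P] fun ω => ((κ l (X (l - 1) ω)) A).toReal)
    -- payoffs and lower approximations of the value functions
    (g : ℕ → (Fin d → ℝ) → ℝ) (hgm : ∀ j, Measurable (g j))
    (hgL2 : ∀ j, j ≤ J → MemLp (fun ω => g j (X j ω)) 2 P)
    (v : ℕ → (Fin d → ℝ) → ℝ) (hvm : ∀ l, Measurable (v l))
    (hvL2 : ∀ l, 1 ≤ l → l ≤ J → MemLp (fun ω => v l (X l ω)) 2 P)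
    -- outer paths: independent copies of the chain
    (Xo : Fin N → ℕ → Ω → (Fin d → ℝ)) (hXom : ∀ n j, Measurable (Xo n j))
    (hlaw : ∀ n, Measure.map (fun ω => fun j : Fin (J + 1) => Xo n (j : ℕ) ω) P
      = Measure.map (fun ω => fun j : Fin (J + 1) => X (j : ℕ) ω) P)
    -- inner samples: conditionally independent given the outer paths, with the right law
    (Xi : Fin N → Fin Nd → ℕ → Ω → (Fin d → ℝ)) (hXim : ∀ n nd l, Measurable (Xi n nd l))
    (hCondLaw : ∀ (n : Fin N) (nd : Fin Nd) (l : ℕ), 1 ≤ l → l ≤ J →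
      ∀ A : Set (Fin d → ℝ), MeasurableSet A →
      (P[fun ω => A.indicator (fun _ => (1 : ℝ)) (Xi n nd l ω) |
          (⨆ (m : Fin N) (j ∈ Finset.range (J + 1)),
            MeasurableSpace.comap (Xo m j) inferInstance) ⊔
          (⨆ (m : Fin N) (md : Fin Nd) (i ∈ Finset.Icc 1 J)
            (_ : ¬(m = n ∧ md = nd ∧ i = l)),
            MeasurableSpace.comap (Xi m md i) inferInstance)])
        =ᵐ[P] fun ω => ((κ l (Xo n (l - 1) ω)) A).toReal) :
    (∫ ω, (g J (X J ω) + ∑ l ∈ Finset.Icc 1 J,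
        max (g (l - 1) (X (l - 1) ω) - ∫ y, v l y ∂(κ l (X (l - 1) ω))) 0) ∂P)
      ≤ ∫ ω, (N : ℝ)⁻¹ * ∑ n : Fin N,
          (g J (Xo n J ω) + ∑ j ∈ Finset.Icc 1 J,
            max (g (j - 1) (Xo n (j - 1) ω)
              - (Nd : ℝ)⁻¹ * ∑ nd : Fin Nd, v j (Xi n nd j ω)) 0) ∂P := by
  have houter := pathSigmaAlgebra_le (J := J) hXom
  have hXoX : ∀ n j, j ≤ J → IdentDistrib (Xo n j) (X j) P P := fun n _ hj =>
    identDistrib_of_map_path_eq (hXom n) hXm (hlaw n) hj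
  have hXi : ∀ n nd l, 1 ≤ l → l ≤ J →
      HasCondLaw (Xi n nd l) (κ l) (Xo n (l - 1)) P (pathSigmaAlgebra Xo J) :=
    fun n nd l hl1 hlJ => HasCondLaw.mono (hCondLaw n nd l hl1 hlJ) le_sup_left
      (sup_le houter (iSup_le fun m => iSup_le fun md => iSup₂_le fun i _ => iSup_le fun _ =>
        (hXim m md i).comap_le)) (measurable_pathSigmaAlgebra n (by omega))
  have hXiX : ∀ n nd l, 1 ≤ l → l ≤ J → IdentDistrib (Xi n nd l) (X l) P P :=
    fun n nd l hl1 hlJ => (hXi n nd l hl1 hlJ).identDistrib (hMarkov l hl1 hlJ) houter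
      (iSup₂_le fun i _ => (hXm i).comap_le) (hXim n nd l) (hXm l) (hXom n (l - 1))
      (hXm (l - 1)) (hXoX n (l - 1) (by omega))
  have hgXo : ∀ n j, j ≤ J → Integrable (fun ω => g j (Xo n j ω)) P := fun n j hj =>
    ((hXoX n j hj).comp (hgm j)).integrable_iff.2 ((hgL2 j hj).integrable one_le_two)
  have hvXi : ∀ n nd l, 1 ≤ l → l ≤ J → Integrable (fun ω => v l (Xi n nd l ω)) P :=
    fun n nd l hl1 hlJ => ((hXiX n nd l hl1 hlJ).comp (hvm l)).integrable_iff.2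
      ((hvL2 l hl1 hlJ).integrable one_le_two)
  exact le_integral_mean (f := fun n => nestedEEPPathwise g v J (Xo n) (Xi n)) (by omega)
    (fun n => integrable_nestedEEPPathwise (hgXo n) (hvXi n))
    fun n => integral_eepPathwise_le_integral_nestedEEPPathwise (by omega) houter hgm hvm
      (fun _ hj => measurable_pathSigmaAlgebra n hj) (hXim n) (hXoX n) (hXi n) (hgXo n) (hvXi n)

/-- Proposition 1, inequality (9): the nested Monte Carlo early-exercise-premium estimator
U_{N,N_d} is biased high, i.e. E[U_{N,N_d}] ≥ U_0. -/
theorem nested_eep_estimator_biased_high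
    {Ω : Type*} {mΩ : MeasurableSpace Ω} (P : Measure Ω) [IsProbabilityMeasure P]
    (d J N Nd : ℕ) (hN : 1 ≤ N) (hNd : 1 ≤ Nd) (x0 : Fin d → ℝ)
    -- the Markov chain
    (X : ℕ → Ω → (Fin d → ℝ)) (hXm : ∀ j, Measurable (X j)) (hX0 : ∀ ω, X 0 ω = x0)
    (κ : ℕ → Kernel (Fin d → ℝ) (Fin d → ℝ)) (hκ : ∀ l, IsMarkovKernel (κ l))
    (hMarkov : ∀ l, 1 ≤ l → l ≤ J → ∀ A : Set (Fin d → ℝ), MeasurableSet A →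
      (P[fun ω => A.indicator (fun _ => (1 : ℝ)) (X l ω) |
          ⨆ i ∈ Finset.range l, MeasurableSpace.comap (X i) inferInstance])
        =ᵐ[P] fun ω => ((κ l (X (l - 1) ω)) A).toReal)
    -- payoffs and lower approximations of the value functions
    (g : ℕ → (Fin d → ℝ) → ℝ) (hgm : ∀ j, Measurable (g j)) (hgnonneg : ∀ j x, 0 ≤ g j x)
    (hgL2 : ∀ j, j ≤ J → MemLp (fun ω => g j (X j ω)) 2 P)
    (v : ℕ → (Fin d → ℝ) → ℝ) (hvm : ∀ l, Measurable (v l))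
    (hvL2 : ∀ l, 1 ≤ l → l ≤ J → MemLp (fun ω => v l (X l ω)) 2 P)
    -- outer paths: independent copies of the chain
    (Xo : Fin N → ℕ → Ω → (Fin d → ℝ)) (hXom : ∀ n j, Measurable (Xo n j))
    (hlaw : ∀ n, Measure.map (fun ω => fun j : Fin (J + 1) => Xo n (j : ℕ) ω) P
      = Measure.map (fun ω => fun j : Fin (J + 1) => X (j : ℕ) ω) P)
    (hIndepOuter : iIndepFun
      (fun n : Fin N => fun ω => fun j : Fin (J + 1) => Xo n (j : ℕ) ω) P)
    -- inner samples: conditionally independent given the outer paths, with the right law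
    (Xi : Fin N → Fin Nd → ℕ → Ω → (Fin d → ℝ)) (hXim : ∀ n nd l, Measurable (Xi n nd l))
    (hCondLaw : ∀ (n : Fin N) (nd : Fin Nd) (l : ℕ), 1 ≤ l → l ≤ J →
      ∀ A : Set (Fin d → ℝ), MeasurableSet A →
      (P[fun ω => A.indicator (fun _ => (1 : ℝ)) (Xi n nd l ω) |
          (⨆ (m : Fin N) (j ∈ Finset.range (J + 1)),
            MeasurableSpace.comap (Xo m j) inferInstance) ⊔
          (⨆ (m : Fin N) (md : Fin Nd) (i ∈ Finset.Icc 1 J)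
            (_ : ¬(m = n ∧ md = nd ∧ i = l)),
            MeasurableSpace.comap (Xi m md i) inferInstance)])
        =ᵐ[P] fun ω => ((κ l (Xo n (l - 1) ω)) A).toReal) :
    (∫ ω, (g J (X J ω) + ∑ l ∈ Finset.Icc 1 J,
        max (g (l - 1) (X (l - 1) ω) - ∫ y, v l y ∂(κ l (X (l - 1) ω))) 0) ∂P)
      ≤ ∫ ω, (N : ℝ)⁻¹ * ∑ n : Fin N,
          (g J (Xo n J ω) + ∑ j ∈ Finset.Icc 1 J,
            max (g (j - 1) (Xo n (j - 1) ω)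
              - (Nd : ℝ)⁻¹ * ∑ nd : Fin Nd, v j (Xi n nd j ω)) 0) ∂P :=
  nested_eep_estimator_biased_high_general (mΩ := mΩ) P d J N Nd hN hNd X hXm κ hκ hMarkov g hgm
    hgL2 v hvm hvL2 Xo hXom hlaw Xi hXim hCondLaw
end

section
/- Complexity bound for the regression-based dual algorithm: for all real numbers β > 1, κ > 0, B > 0, D > 0 and every J ∈ ℕ, there exists a constant C > 0 such that for every ε ∈ (0, 1/2) there exist real numbers K, Q, N, N_d, N_r ≥ 1 satisfying the accuracy constraints max{ J K Q (log N_r + 1)/(N_r N_d), J B/(K^β N_d), J D K/(Q^κ N_d), J/N } ≤ ε² and the cost bound J K max{ N_r Q², N Q, N N_d } ≤ C ε^{−(4(β+1)(κ+3)+4κ)/((β+1)(κ+3)+βκ)} √(log(1/ε)). -/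
set_option maxHeartbeats 1000000


/-- Complexity bound (21) for the regression-based dual algorithm: for β > 1, κ > 0,
constants B, D > 0 and any number of exercise dates J, there is a constant C such that for
every accuracy ε ∈ (0, 1/2) one can choose algorithmic parameters K, Q, N, N_d, N_r ≥ 1
satisfying the accuracy constraints (20) and whose computational cost (19) is bounded by
C · ε^{-(4(β+1)(κ+3)+4κ)/((β+1)(κ+3)+βκ)} · √(log(1/ε)). -/
theorem regression_dual_complexity (β κ B D : ℝ) (J : ℕ)
    (hβ : 1 < β) (hκ : 0 < κ) (hB : 0 < B) (hD : 0 < D) :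
    ∃ C : ℝ, 0 < C ∧ ∀ ε : ℝ, 0 < ε → ε < 1 / 2 →
      ∃ K Q N Nd Nr : ℝ,
        1 ≤ K ∧ 1 ≤ Q ∧ 1 ≤ N ∧ 1 ≤ Nd ∧ 1 ≤ Nr ∧
        (J * K * Q * (Real.log Nr + 1)) / (Nr * Nd) ≤ ε ^ 2 ∧
        (J * B) / (K ^ β * Nd) ≤ ε ^ 2 ∧
        (J * D * K) / (Q ^ κ * Nd) ≤ ε ^ 2 ∧
        (J : ℝ) / N ≤ ε ^ 2 ∧
        J * K * max (Nr * Q ^ 2) (max (N * Q) (N * Nd)) ≤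
          C * ε ^ (-((4 * (β + 1) * (κ + 3) + 4 * κ) / ((β + 1) * (κ + 3) + β * κ)))
            * Real.sqrt (Real.log (1 / ε)) := by
  have hJ0 : (0:ℝ) ≤ (J:ℝ) := Nat.cast_nonneg J
  have hJ1 : (1:ℝ) ≤ (J:ℝ) + 1 := by linarith
  set S : ℝ := (β + 1) * (κ + 3) + β * κ with hSdef
  have hS0 : (0:ℝ) < S := by nlinarith
  set p : ℝ := (4 * (β + 1) * (κ + 3) + 4 * κ) / S with hpdef
  set k : ℝ := 4 * κ / S with hkdef
  set q : ℝ := 4 * (β + 1) / S with hqdef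
  set d : ℝ := (2 * κ + 6 * β + 6) / S with hddef
  set r : ℝ := 4 * (β + 1) * (κ + 1) / S with hrdef
  have hk0 : 0 < k := by rw [hkdef]; exact div_pos (by linarith) hS0
  have hq0 : 0 < q := by rw [hqdef]; exact div_pos (by linarith) hS0
  have hd0 : 0 < d := by rw [hddef]; exact div_pos (by linarith) hS0
  have hr0 : 0 < r := by rw [hrdef]; exact div_pos (by nlinarith) hS0
  have idβ : β * k + d = 2 := by
    rw [hkdef, hddef]; field_simp; rw [hSdef]; ring
  have idκ : κ * q + d = 2 + k := by
    rw [hkdef, hqdef, hddef]; field_simp; rw [hSdef]; ring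
  have idr : r + d = k + q + 2 := by
    rw [hkdef, hqdef, hddef, hrdef]; field_simp; rw [hSdef]; ring
  have idp1 : k + r + 2 * q = p := by
    rw [hkdef, hqdef, hrdef, hpdef]; field_simp; ring
  have idp2 : k + 2 + d = p := by
    rw [hkdef, hddef, hpdef]; field_simp; rw [hSdef]; ring
  have idp3 : k + 2 + q ≤ p := by
    have e : p - (k + 2 + q) = (2 * β + 2 * κ + 2) / S := by
      rw [hkdef, hqdef, hpdef]; field_simp; rw [hSdef]; ring
    have h0 : (0:ℝ) < (2 * β + 2 * κ + 2) / S := div_pos (by linarith) hS0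
    linarith
  -- constants
  set b : ℝ := 2 * (((J:ℝ) + 1) * (B + D + 1) * (r + 5)) with hbdef
  have hBD1 : (1:ℝ) ≤ B + D + 1 := by linarith
  have hr5 : (1:ℝ) ≤ r + 5 := by linarith
  have h12 : (1:ℝ) ≤ ((J:ℝ) + 1) * (B + D + 1) :=
    le_trans hJ1 (le_mul_of_one_le_right (by linarith) hBD1)
  have hkey : (1:ℝ) ≤ ((J:ℝ) + 1) * (B + D + 1) * (r + 5) :=
    le_trans h12 (le_mul_of_one_le_right (by linarith) hr5)
  have hb2 : (2:ℝ) ≤ b := by rw [hbdef]; linarith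
  have hb : 0 < b := by linarith
  have hJBb : (J:ℝ) * B ≤ b * (1/2) := by
    have h1 : (J:ℝ) * B ≤ ((J:ℝ) + 1) * (B + D + 1) :=
      mul_le_mul (by linarith) (by linarith) hB.le (by linarith)
    have h2 : ((J:ℝ) + 1) * (B + D + 1) ≤ ((J:ℝ) + 1) * (B + D + 1) * (r + 5) :=
      le_mul_of_one_le_right (by linarith) hr5
    rw [hbdef]; linarith
  have hJDb : (J:ℝ) * D ≤ b * (1/2) := by
    have h1 : (J:ℝ) * D ≤ ((J:ℝ) + 1) * (B + D + 1) :=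
      mul_le_mul (by linarith) (by linarith) hD.le (by linarith)
    have h2 : ((J:ℝ) + 1) * (B + D + 1) ≤ ((J:ℝ) + 1) * (B + D + 1) * (r + 5) :=
      le_mul_of_one_le_right (by linarith) hr5
    rw [hbdef]; linarith
  have hJr5b : (J:ℝ) * (r + 5) ≤ 2 * b := by
    have hJle : (J:ℝ) ≤ ((J:ℝ) + 1) * (B + D + 1) :=
      le_trans (by linarith) (le_mul_of_one_le_right (by linarith) hBD1)
    have h1 : (J:ℝ) * (r + 5) ≤ ((J:ℝ) + 1) * (B + D + 1) * (r + 5) :=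
      mul_le_mul_of_nonneg_right hJle (by linarith)
    rw [hbdef]; nlinarith [h1, hkey, hr5]
  have hC : 0 < 2 * ((J:ℝ) + 1) + 2 * ((J:ℝ) + 1) ^ 2 + ((J:ℝ) + 1) ^ 2 * b := by
    have h1 : (0:ℝ) < ((J:ℝ) + 1) ^ 2 := pow_pos (by linarith) 2
    have h2 : (0:ℝ) < ((J:ℝ) + 1) ^ 2 * b := mul_pos h1 hb
    linarith
  refine ⟨2 * ((J:ℝ) + 1) + 2 * ((J:ℝ) + 1) ^ 2 + ((J:ℝ) + 1) ^ 2 * b, hC, ?_⟩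
  intro ε hε hεhalf
  have hε1 : ε ≤ 1 := by linarith
  set L : ℝ := Real.log (1 / ε) with hLdef
  have hlog2 : (1/2:ℝ) < Real.log 2 := by
    have := Real.log_two_gt_d9; linarith
  have hlog2' : Real.log 2 < 1 := by
    have := Real.log_two_lt_d9; linarith
  have h2ε : (2:ℝ) ≤ 1 / ε := by
    rw [le_div_iff₀ hε]; linarith
  have hL2 : Real.log 2 ≤ L := by
    rw [hLdef]
    exact Real.log_le_log (by norm_num) h2ε
  have hLhalf : (1/2:ℝ) ≤ L := by linarith
  have hL0 : (0:ℝ) < L := by linarith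
  set sL : ℝ := Real.sqrt L with hsLdef
  have hsL0 : 0 < sL := by rw [hsLdef]; exact Real.sqrt_pos.mpr hL0
  have hsLhalf : (1/2:ℝ) ≤ sL := by
    rw [hsLdef]
    have h14 : Real.sqrt (1/4) ≤ Real.sqrt L := Real.sqrt_le_sqrt (by linarith)
    have e : Real.sqrt (1/4:ℝ) = 1/2 := by
      rw [show (1/4:ℝ) = (1/2)^2 by norm_num, Real.sqrt_sq (by norm_num : (0:ℝ) ≤ 1/2)]
    linarith
  have hsq : sL * sL = L := by rw [hsLdef]; exact Real.mul_self_sqrt hL0.le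
  have hx : ∀ a : ℝ, (0:ℝ) < ε ^ a := fun a => Real.rpow_pos_of_pos hε a
  have hx1 : ∀ a : ℝ, a ≤ 0 → (1:ℝ) ≤ ε ^ a := by
    intro a ha
    have := Real.rpow_le_rpow_of_exponent_ge hε hε1 ha
    rwa [Real.rpow_zero] at this
  have hlogε : Real.log ε = -L := by
    rw [hLdef, one_div, Real.log_inv]; ring
  have hNd1 : (1:ℝ) ≤ b * ε ^ (-d) * sL := by
    have t1 : (2:ℝ) ≤ b * ε ^ (-d) :=
      le_trans hb2 (le_mul_of_one_le_right (by linarith) (hx1 (-d) (by linarith)))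
    have t2 : (2:ℝ) * (1/2) ≤ b * ε ^ (-d) * sL :=
      mul_le_mul t1 hsLhalf (by norm_num) (by linarith)
    linarith
  have hNr1 : (1:ℝ) ≤ 2 * ε ^ (-r) * sL := by
    have t1 : (2:ℝ) ≤ 2 * ε ^ (-r) :=
      le_mul_of_one_le_right (by norm_num) (hx1 (-r) (by linarith))
    have t2 : (2:ℝ) * (1/2) ≤ 2 * ε ^ (-r) * sL :=
      mul_le_mul t1 hsLhalf (by norm_num) (by linarith)
    linarith
  refine ⟨ε ^ (-k), ε ^ (-q), ((J:ℝ) + 1) * ε ^ (-(2:ℝ)), b * ε ^ (-d) * sL,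
    2 * ε ^ (-r) * sL, hx1 (-k) (by linarith), hx1 (-q) (by linarith), ?_, hNd1, hNr1,
    ?_, ?_, ?_, ?_, ?_⟩
  · -- 1 ≤ N
    exact le_trans (hx1 (-(2:ℝ)) (by norm_num))
      (le_mul_of_one_le_left (hx (-(2:ℝ))).le hJ1)
  · -- constraint (1)
    have hpos : (0:ℝ) < 2 * ε ^ (-r) * sL * (b * ε ^ (-d) * sL) :=
      mul_pos (mul_pos (mul_pos two_pos (hx (-r))) hsL0)
        (mul_pos (mul_pos hb (hx (-d))) hsL0)
    rw [div_le_iff₀ hpos]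
    have hlogeq : Real.log (2 * ε ^ (-r) * sL) = Real.log 2 + r * L + Real.log L / 2 := by
      rw [Real.log_mul (ne_of_gt (mul_pos two_pos (hx (-r)))) (ne_of_gt hsL0),
        Real.log_mul (by norm_num) (ne_of_gt (hx (-r))), Real.log_rpow hε,
        hsLdef, Real.log_sqrt hL0.le, hlogε]
      ring
    have hlogL : Real.log L ≤ L - 1 := Real.log_le_sub_one_of_pos hL0
    have hT : Real.log (2 * ε ^ (-r) * sL) + 1 ≤ (r + 5) * L := by
      rw [hlogeq]
      have expand : (r + 5) * L = r * L + 5 * L := by ring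
      linarith [expand]
    have hT0 : (0:ℝ) ≤ Real.log (2 * ε ^ (-r) * sL) + 1 := by
      have := Real.log_nonneg hNr1
      linarith
    have hJT : (J:ℝ) * (Real.log (2 * ε ^ (-r) * sL) + 1) ≤ 2 * b * L := by
      have h1 : (J:ℝ) * (Real.log (2 * ε ^ (-r) * sL) + 1) ≤ (J:ℝ) * ((r + 5) * L) :=
        mul_le_mul_of_nonneg_left hT hJ0
      have h2 : (J:ℝ) * ((r + 5) * L) ≤ 2 * b * L := by
        rw [← mul_assoc]
        exact mul_le_mul_of_nonneg_right hJr5b hL0.le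
      exact le_trans h1 h2
    have f : ε ^ (2:ℕ) * ε ^ (-r) * ε ^ (-d) = ε ^ (-k) * ε ^ (-q) := by
      rw [← Real.rpow_natCast ε 2, ← Real.rpow_add hε, ← Real.rpow_add hε,
        ← Real.rpow_add hε]
      congr 1
      push_cast
      linarith
    have e : ε ^ 2 * (2 * ε ^ (-r) * sL * (b * ε ^ (-d) * sL)) =
        ε ^ (-k) * ε ^ (-q) * (2 * b * L) := by
      calc ε ^ 2 * (2 * ε ^ (-r) * sL * (b * ε ^ (-d) * sL))
          = (ε ^ 2 * ε ^ (-r) * ε ^ (-d)) * (sL * sL) * (2 * b) := by ring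
        _ = (ε ^ (-k) * ε ^ (-q)) * L * (2 * b) := by rw [f, hsq]
        _ = ε ^ (-k) * ε ^ (-q) * (2 * b * L) := by ring
    rw [e]
    calc (J:ℝ) * ε ^ (-k) * ε ^ (-q) * (Real.log (2 * ε ^ (-r) * sL) + 1)
        = (ε ^ (-k) * ε ^ (-q)) * ((J:ℝ) * (Real.log (2 * ε ^ (-r) * sL) + 1)) := by ring
      _ ≤ (ε ^ (-k) * ε ^ (-q)) * (2 * b * L) :=
          mul_le_mul_of_nonneg_left hJT (le_of_lt (mul_pos (hx (-k)) (hx (-q))))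
      _ = ε ^ (-k) * ε ^ (-q) * (2 * b * L) := by ring
  · -- constraint (2)
    have hpos : (0:ℝ) < ε ^ (-k * β) * (b * ε ^ (-d) * sL) :=
      mul_pos (hx (-k * β)) (mul_pos (mul_pos hb (hx (-d))) hsL0)
    rw [← Real.rpow_mul hε.le, div_le_iff₀ hpos]
    have f : ε ^ (2:ℕ) * ε ^ (-k * β) * ε ^ (-d) = 1 := by
      rw [← Real.rpow_natCast ε 2, ← Real.rpow_add hε, ← Real.rpow_add hε,
        show ((2:ℕ):ℝ) + -k * β + -d = 0 by push_cast; linear_combination -idβ,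
        Real.rpow_zero]
    have e : ε ^ 2 * (ε ^ (-k * β) * (b * ε ^ (-d) * sL)) = b * sL := by
      calc ε ^ 2 * (ε ^ (-k * β) * (b * ε ^ (-d) * sL))
          = (ε ^ 2 * ε ^ (-k * β) * ε ^ (-d)) * (b * sL) := by ring
        _ = b * sL := by rw [f, one_mul]
    rw [e]
    have h1 : b * (1/2) ≤ b * sL := mul_le_mul_of_nonneg_left hsLhalf hb.le
    linarith
  · -- constraint (3)
    have hpos : (0:ℝ) < ε ^ (-q * κ) * (b * ε ^ (-d) * sL) :=
      mul_pos (hx (-q * κ)) (mul_pos (mul_pos hb (hx (-d))) hsL0)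
    rw [← Real.rpow_mul hε.le, div_le_iff₀ hpos]
    have f : ε ^ (2:ℕ) * ε ^ (-q * κ) * ε ^ (-d) = ε ^ (-k) := by
      rw [← Real.rpow_natCast ε 2, ← Real.rpow_add hε, ← Real.rpow_add hε]
      congr 1
      push_cast
      linear_combination -idκ
    have e : ε ^ 2 * (ε ^ (-q * κ) * (b * ε ^ (-d) * sL)) = ε ^ (-k) * (b * sL) := by
      calc ε ^ 2 * (ε ^ (-q * κ) * (b * ε ^ (-d) * sL))
          = (ε ^ 2 * ε ^ (-q * κ) * ε ^ (-d)) * (b * sL) := by ring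
        _ = ε ^ (-k) * (b * sL) := by rw [f]
    rw [e]
    have h1 : b * (1/2) ≤ b * sL := mul_le_mul_of_nonneg_left hsLhalf hb.le
    have h2 : (J:ℝ) * D ≤ b * sL := by linarith
    have h3 := mul_le_mul_of_nonneg_right h2 (hx (-k)).le
    rw [mul_comm (ε ^ (-k)) (b * sL)]
    exact h3
  · -- constraint (4)
    have hpos : (0:ℝ) < ((J:ℝ) + 1) * ε ^ (-(2:ℝ)) :=
      mul_pos (by linarith) (hx (-(2:ℝ)))
    rw [div_le_iff₀ hpos]
    have f : ε ^ (2:ℕ) * ε ^ (-(2:ℝ)) = 1 := by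
      rw [← Real.rpow_natCast ε 2, ← Real.rpow_add hε,
        show ((2:ℕ):ℝ) + -(2:ℝ) = 0 by norm_num, Real.rpow_zero]
    have e : ε ^ 2 * (((J:ℝ) + 1) * ε ^ (-(2:ℝ))) = (J:ℝ) + 1 := by
      calc ε ^ 2 * (((J:ℝ) + 1) * ε ^ (-(2:ℝ)))
          = (ε ^ 2 * ε ^ (-(2:ℝ))) * ((J:ℝ) + 1) := by ring
        _ = (J:ℝ) + 1 := by rw [f, one_mul]
    rw [e]
    linarith
  · -- cost bound (21)
    have hX0 : (0:ℝ) ≤ 2 * ε ^ (-r) * sL * (ε ^ (-q)) ^ 2 :=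
      (mul_pos (mul_pos (mul_pos two_pos (hx (-r))) hsL0) (pow_pos (hx (-q)) 2)).le
    have hY0 : (0:ℝ) ≤ ((J:ℝ) + 1) * ε ^ (-(2:ℝ)) * ε ^ (-q) :=
      (mul_pos (mul_pos (by linarith : (0:ℝ) < (J:ℝ) + 1) (hx (-(2:ℝ)))) (hx (-q))).le
    have hZ0 : (0:ℝ) ≤ ((J:ℝ) + 1) * ε ^ (-(2:ℝ)) * (b * ε ^ (-d) * sL) :=
      (mul_pos (mul_pos (by linarith : (0:ℝ) < (J:ℝ) + 1) (hx (-(2:ℝ))))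
        (mul_pos (mul_pos hb (hx (-d))) hsL0)).le
    have hmax : max (2 * ε ^ (-r) * sL * (ε ^ (-q)) ^ 2)
        (max (((J:ℝ) + 1) * ε ^ (-(2:ℝ)) * ε ^ (-q))
          (((J:ℝ) + 1) * ε ^ (-(2:ℝ)) * (b * ε ^ (-d) * sL))) ≤
        2 * ε ^ (-r) * sL * (ε ^ (-q)) ^ 2 + (((J:ℝ) + 1) * ε ^ (-(2:ℝ)) * ε ^ (-q)
          + ((J:ℝ) + 1) * ε ^ (-(2:ℝ)) * (b * ε ^ (-d) * sL)) :=
      max_le (by linarith) (max_le (by linarith) (by linarith))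
    have bound1 : (J:ℝ) * ε ^ (-k) * (2 * ε ^ (-r) * sL * (ε ^ (-q)) ^ 2) ≤
        2 * ((J:ℝ) + 1) * ε ^ (-p) * sL := by
      have f : ε ^ (-k) * ε ^ (-r) * (ε ^ (-q) * ε ^ (-q)) = ε ^ (-p) := by
        rw [← Real.rpow_add hε, ← Real.rpow_add hε, ← Real.rpow_add hε]
        congr 1
        linarith
      calc (J:ℝ) * ε ^ (-k) * (2 * ε ^ (-r) * sL * (ε ^ (-q)) ^ 2)
          = (ε ^ (-k) * ε ^ (-r) * (ε ^ (-q) * ε ^ (-q))) * sL * (2 * (J:ℝ)) := by ring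
        _ = ε ^ (-p) * sL * (2 * (J:ℝ)) := by rw [f]
        _ ≤ 2 * ((J:ℝ) + 1) * ε ^ (-p) * sL := by
            have h0 := mul_pos (hx (-p)) hsL0
            linarith [h0]
    have bound2 : (J:ℝ) * ε ^ (-k) * (((J:ℝ) + 1) * ε ^ (-(2:ℝ)) * ε ^ (-q)) ≤
        2 * ((J:ℝ) + 1) ^ 2 * ε ^ (-p) * sL := by
      have f : ε ^ (-k) * ε ^ (-(2:ℝ)) * ε ^ (-q) = ε ^ (-(k + 2 + q)) := by
        rw [← Real.rpow_add hε, ← Real.rpow_add hε]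
        congr 1
        ring
      have mono : ε ^ (-(k + 2 + q)) ≤ ε ^ (-p) :=
        Real.rpow_le_rpow_of_exponent_ge hε hε1 (by linarith)
      have s1 : ε ^ (-(k + 2 + q)) * ((J:ℝ) * ((J:ℝ) + 1)) ≤
          ε ^ (-p) * ((J:ℝ) * ((J:ℝ) + 1)) :=
        mul_le_mul_of_nonneg_right mono (mul_nonneg hJ0 (by linarith))
      have s2 : ε ^ (-p) * ((J:ℝ) * ((J:ℝ) + 1)) * 1 ≤
          ε ^ (-p) * (((J:ℝ) + 1) * ((J:ℝ) + 1)) * (2 * sL) := by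
        apply mul_le_mul
        · exact mul_le_mul_of_nonneg_left
            (mul_le_mul_of_nonneg_right (by linarith) (by linarith)) (hx (-p)).le
        · linarith
        · norm_num
        · exact mul_nonneg (hx (-p)).le
            (mul_nonneg (by linarith) (by linarith))
      calc (J:ℝ) * ε ^ (-k) * (((J:ℝ) + 1) * ε ^ (-(2:ℝ)) * ε ^ (-q))
          = (ε ^ (-k) * ε ^ (-(2:ℝ)) * ε ^ (-q)) * ((J:ℝ) * ((J:ℝ) + 1)) := by ring
        _ = ε ^ (-(k + 2 + q)) * ((J:ℝ) * ((J:ℝ) + 1)) := by rw [f]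
        _ ≤ 2 * ((J:ℝ) + 1) ^ 2 * ε ^ (-p) * sL := by linarith [s1, s2]
    have bound3 : (J:ℝ) * ε ^ (-k) * (((J:ℝ) + 1) * ε ^ (-(2:ℝ)) * (b * ε ^ (-d) * sL)) ≤
        ((J:ℝ) + 1) ^ 2 * b * ε ^ (-p) * sL := by
      have f : ε ^ (-k) * ε ^ (-(2:ℝ)) * ε ^ (-d) = ε ^ (-p) := by
        rw [← Real.rpow_add hε, ← Real.rpow_add hε]
        congr 1
        linarith
      have s : ((J:ℝ) * ((J:ℝ) + 1)) * (ε ^ (-p) * (b * sL)) ≤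
          (((J:ℝ) + 1) * ((J:ℝ) + 1)) * (ε ^ (-p) * (b * sL)) :=
        mul_le_mul_of_nonneg_right
          (mul_le_mul_of_nonneg_right (by linarith) (by linarith))
          (mul_nonneg (hx (-p)).le (mul_nonneg hb.le hsL0.le))
      calc (J:ℝ) * ε ^ (-k) * (((J:ℝ) + 1) * ε ^ (-(2:ℝ)) * (b * ε ^ (-d) * sL))
          = (ε ^ (-k) * ε ^ (-(2:ℝ)) * ε ^ (-d)) * ((J:ℝ) * ((J:ℝ) + 1) * (b * sL)) := by
            ring
        _ = ε ^ (-p) * ((J:ℝ) * ((J:ℝ) + 1) * (b * sL)) := by rw [f]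
        _ ≤ ((J:ℝ) + 1) ^ 2 * b * ε ^ (-p) * sL := by linarith [s]
    calc (J:ℝ) * ε ^ (-k) * max (2 * ε ^ (-r) * sL * (ε ^ (-q)) ^ 2)
          (max (((J:ℝ) + 1) * ε ^ (-(2:ℝ)) * ε ^ (-q))
            (((J:ℝ) + 1) * ε ^ (-(2:ℝ)) * (b * ε ^ (-d) * sL)))
        ≤ (J:ℝ) * ε ^ (-k) * (2 * ε ^ (-r) * sL * (ε ^ (-q)) ^ 2
            + (((J:ℝ) + 1) * ε ^ (-(2:ℝ)) * ε ^ (-q)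
              + ((J:ℝ) + 1) * ε ^ (-(2:ℝ)) * (b * ε ^ (-d) * sL))) :=
          mul_le_mul_of_nonneg_left hmax (mul_nonneg hJ0 (hx (-k)).le)
      _ = (J:ℝ) * ε ^ (-k) * (2 * ε ^ (-r) * sL * (ε ^ (-q)) ^ 2)
          + (J:ℝ) * ε ^ (-k) * (((J:ℝ) + 1) * ε ^ (-(2:ℝ)) * ε ^ (-q))
          + (J:ℝ) * ε ^ (-k) * (((J:ℝ) + 1) * ε ^ (-(2:ℝ)) * (b * ε ^ (-d) * sL)) := by
          ring
      _ ≤ (2 * ((J:ℝ) + 1) + 2 * ((J:ℝ) + 1) ^ 2 + ((J:ℝ) + 1) ^ 2 * b) * ε ^ (-p) * sL := by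
          linarith [bound1, bound2, bound3]
end

section
/- Let p ∈ ℕ, h > 0, Δ > 0, coefficients α_l ∈ ℂ for l = −p,…,p, and let v(y) = Σ_{l=−p}^{p} α_l exp(i h l y) be a trigonometric polynomial. Let μ, σ : ℝ → ℝ be functions with σ bounded, let ξ be a standard Gaussian random variable, and define a_k(x) = (1/√(k!)) E[v(x + μ(x)Δ + σ(x)√Δ·ξ) H_k(ξ)] for k ≥ 1. Then for every k ≥ 1 and every x ∈ ℝ, |a_k(x)| ≤ (h^k Δ^{k/2}/√(k!)) Σ_{l=−p}^{p} |α_l| |l|^k |σ(x)|^k exp(−h²l²σ(x)²Δ/2); consequently, for every β > 0 the sum Σ_{k≥1} k^β sup_{x∈ℝ} |a_k(x)|² is finite. -/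
/-!
The Hermite coefficients of a plane wave are explicit:
`E[exp(icξ) H_k(ξ)] = (ic)^k exp(-c²/2)`. For `k = 0` this is the characteristic function of
`N(0,1)`; the recursion `H_{k+1} = X H_k - H_k'` together with Gaussian integration by parts
`E[f'(ξ)] = E[ξ f(ξ)]` contributes one factor `ic` per step. The integrand defining `a_k(x)` is a
finite sum of such waves with `c = h l σ(x) √Δ`, so the triangle inequality gives the bound on
`|a_k(x)|`. Bounding `|l| ≤ p`, `|σ| ≤ Cσ` and the Gaussian factor by `1` yields
`sup_x |a_k(x)|² ≤ A² M^{2k} / k!`, and `k^β ≤ e^{βk}` makes the weighted series summable.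
-/

open MeasureTheory ProbabilityTheory Polynomial Complex
open scoped NNReal

lemma integrable_gaussianReal_iff {E : Type*} [NormedAddCommGroup E] [NormedSpace ℝ E]
    {μ : ℝ} {v : ℝ≥0} (hv : v ≠ 0) {f : ℝ → E} :
    Integrable f (gaussianReal μ v) ↔ Integrable (fun x => gaussianPDFReal μ v x • f x) := by
  rw [gaussianReal_of_var_ne_zero μ hv,
    integrable_withDensity_iff_integrable_smul' (measurable_gaussianPDF μ v)
      (ae_of_all _ fun _ => gaussianPDF_lt_top)]
  simp only [toReal_gaussianPDF]

lemma hasDerivAt_gaussianPDFReal (μ : ℝ) (v : ℝ≥0) (x : ℝ) :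
    HasDerivAt (gaussianPDFReal μ v) (-((x - μ) / v) * gaussianPDFReal μ v x) x := by
  have h : HasDerivAt (fun x => -(x - μ) ^ 2 / (2 * v)) (-((x - μ) / v)) x := by
    refine ((((hasDerivAt_id x).sub_const μ).pow 2).neg.div_const (2 * (v : ℝ))).congr_deriv ?_
    by_cases hv : (v : ℝ) = 0
    · simp [hv]
    · field_simp; simp
  rw [gaussianPDFReal_def]
  exact (h.exp.const_mul _).congr_deriv (by ring)

lemma integral_deriv_gaussianReal_eq_integral_smul {E : Type*} [NormedAddCommGroup E]
    [NormedSpace ℝ E] {f f' : ℝ → E} (hf : ∀ x, HasDerivAt f (f' x) x) (hf_int : Integrable f (gaussianReal 0 1))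
    (hf'_int : Integrable f' (gaussianReal 0 1))
    (hxf_int : Integrable (fun x => x • f x) (gaussianReal 0 1)) :
    ∫ x, f' x ∂gaussianReal 0 1 = ∫ x, x • f x ∂gaussianReal 0 1 := by
  rw [integrable_gaussianReal_iff one_ne_zero] at hf_int hf'_int hxf_int
  have hderiv : ∀ x, HasDerivAt (fun x => gaussianPDFReal 0 1 x • f x)
      (gaussianPDFReal 0 1 x • f' x - gaussianPDFReal 0 1 x • x • f x) x := fun x =>
    ((hasDerivAt_gaussianPDFReal 0 1 x).smul (hf x)).congr_deriv (by
      simp only [sub_zero, NNReal.coe_one, div_one, neg_mul, neg_smul, smul_smul, mul_comm x]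
      abel)
  have h := integral_eq_zero_of_hasDerivAt_of_integrable hderiv (hf'_int.sub hxf_int) hf_int
  rw [integral_sub hf'_int hxf_int, sub_eq_zero] at h
  simpa only [integral_gaussianReal_eq_integral_smul one_ne_zero] using h

lemma integrable_aeval_gaussianReal {R : Type*} [CommSemiring R] [Algebra R ℂ] (μ : ℝ) (v : ℝ≥0)
    (P : R[X]) : Integrable (fun x : ℝ => aeval (x : ℂ) P) (gaussianReal μ v) := by
  induction P using Polynomial.induction_on' with
  | add P Q hP hQ => simp only [map_add]; exact hP.add hQ
  | monomial n a =>
    simp only [aeval_monomial]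
    refine Integrable.const_mul ?_ _
    refine (integrable_norm_iff (by fun_prop)).mp ?_
    simpa only [norm_pow, Complex.norm_real, id] using
      (memLp_id_gaussianReal (μ := μ) (v := v) n).integrable_norm_pow'

lemma norm_cexp_I_mul_mul (a b : ℝ) : ‖cexp (I * a * b)‖ = 1 := by
  rw [norm_exp]
  simp

lemma integrable_cexp_mul_aeval_gaussianReal {R : Type*} [CommSemiring R] [Algebra R ℂ]
    (μ : ℝ) (v : ℝ≥0) (c : ℝ) (P : R[X]) :
    Integrable (fun x : ℝ => cexp (I * c * x) * aeval (x : ℂ) P) (gaussianReal μ v) := by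
  refine (integrable_aeval_gaussianReal μ v P).bdd_mul (c := 1) (by fun_prop)
    (ae_of_all _ fun x => ?_)
  rw [norm_cexp_I_mul_mul]

theorem integral_cexp_mul_hermite_succ (c : ℝ) (k : ℕ) :
    ∫ x, cexp (I * c * x) * aeval (x : ℂ) (hermite (k + 1)) ∂gaussianReal 0 1 =
      I * c * ∫ x, cexp (I * c * x) * aeval (x : ℂ) (hermite k) ∂gaussianReal 0 1 := by
  have hderiv : ∀ x : ℝ, HasDerivAt (fun x : ℝ => cexp (I * c * x) * aeval (x : ℂ) (hermite k))
      (I * c * (cexp (I * c * x) * aeval (x : ℂ) (hermite k)) +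
        cexp (I * c * x) * aeval (x : ℂ) (derivative (hermite k))) x := by
    intro x
    have hexp : HasDerivAt (fun x : ℝ => cexp (I * c * x)) (cexp (I * c * x) * (I * c)) x := by
      simpa using ((ofRealCLM.hasDerivAt (x := x)).const_mul (I * c)).cexp
    exact (hexp.mul ((hermite k).hasDerivAt_aeval (x : ℂ)).comp_ofReal).congr_deriv (by ring)
  have hxf : (fun x : ℝ => x • (cexp (I * c * x) * aeval (x : ℂ) (hermite k))) =
      fun x : ℝ => cexp (I * c * x) * aeval (x : ℂ) (X * hermite k) := by
    ext x
    rw [real_smul, map_mul, aeval_X]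
    ring
  have hintegrable := integrable_cexp_mul_aeval_gaussianReal (R := ℤ) 0 1 c
  have hstein := integral_deriv_gaussianReal_eq_integral_smul hderiv (hintegrable (hermite k))
    (((hintegrable (hermite k)).const_mul _).add (hintegrable (derivative (hermite k))))
    (hxf ▸ hintegrable (X * hermite k))
  rw [hxf, integral_add ((hintegrable _).const_mul _) (hintegrable _), integral_const_mul] at hstein
  simp only [hermite_succ, map_sub, mul_sub]
  rw [integral_sub (hintegrable _) (hintegrable _), ← hstein]
  ring

theorem integral_cexp_mul_hermite_gaussianReal (c : ℝ) (k : ℕ) :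
    ∫ x, cexp (I * c * x) * aeval (x : ℂ) (hermite k) ∂gaussianReal 0 1 =
      (I * c) ^ k * cexp (-(c : ℂ) ^ 2 / 2) := by
  induction k with
  | zero =>
    have h := charFun_gaussianReal (μ := 0) (v := 1) c
    rw [charFun_apply_real] at h
    simp only [hermite_zero, map_one, mul_one, pow_zero, one_mul]
    convert h using 2 <;> push_cast <;> ring_nf
  | succ k ih => rw [integral_cexp_mul_hermite_succ, ih]; ring

lemma norm_I_mul_pow_mul_cexp_neg_sq_div_two (c : ℝ) (k : ℕ) :
    ‖(I * c) ^ k * cexp (-(c : ℂ) ^ 2 / 2)‖ = |c| ^ k * Real.exp (-c ^ 2 / 2) := by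
  have hre : -(c : ℂ) ^ 2 / 2 = ((-c ^ 2 / 2 : ℝ) : ℂ) := by push_cast; ring
  rw [norm_mul, norm_pow, norm_mul, norm_I, one_mul, norm_real, Real.norm_eq_abs, hre,
    norm_exp_ofReal]

lemma norm_integral_sum_cexp_mul_hermite_le {ι : Type*} (S : Finset ι) (α : ι → ℂ) (ω : ι → ℝ)
    (s w : ℝ) (k : ℕ) :
    ‖∫ x, (∑ i ∈ S, α i * cexp (I * ω i * ((s + w * x : ℝ) : ℂ))) * aeval (x : ℂ) (hermite k)
        ∂gaussianReal 0 1‖ ≤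
      ∑ i ∈ S, ‖α i‖ * (|ω i * w| ^ k * Real.exp (-(ω i * w) ^ 2 / 2)) := by
  have hsplit : ∀ i (x : ℝ), α i * cexp (I * ω i * ((s + w * x : ℝ) : ℂ)) *
      aeval (x : ℂ) (hermite k) = α i * cexp (I * ω i * s) *
        (cexp (I * ((ω i * w : ℝ) : ℂ) * x) * aeval (x : ℂ) (hermite k)) := by
    intro i x
    have harg : I * ω i * ((s + w * x : ℝ) : ℂ) = I * ω i * s + I * ((ω i * w : ℝ) : ℂ) * x := by
      push_cast; ring
    rw [harg, exp_add]
    ring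
  simp only [Finset.sum_mul, hsplit]
  rw [integral_finsetSum _ fun i _ =>
    (integrable_cexp_mul_aeval_gaussianReal 0 1 _ (hermite k)).const_mul _]
  refine (norm_sum_le _ _).trans (Finset.sum_le_sum fun i _ => le_of_eq ?_)
  rw [integral_const_mul, integral_cexp_mul_hermite_gaussianReal, norm_mul, norm_mul,
    norm_I_mul_pow_mul_cexp_neg_sq_div_two, norm_cexp_I_mul_mul, mul_one]

lemma summable_rpow_mul_of_le_pow_div_factorial {b : ℕ → ℝ} {β : ℝ} (hβ : 0 ≤ β) (C r : ℝ)
    (hb0 : ∀ k, 0 ≤ b k) (hb : ∀ k, b k ≤ C * r ^ k / k.factorial) :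
    Summable fun k : ℕ => (k : ℝ) ^ β * b k := by
  refine Summable.of_nonneg_of_le (fun k => mul_nonneg (by positivity) (hb0 k)) (fun k => ?_)
    ((Real.summable_pow_div_factorial (Real.exp β * r)).mul_left C)
  have hpow : (k : ℝ) ^ β ≤ Real.exp β ^ k := by
    calc (k : ℝ) ^ β ≤ Real.exp k ^ β :=
          Real.rpow_le_rpow k.cast_nonneg ((le_add_of_nonneg_right zero_le_one).trans
            (Real.add_one_le_exp k)) hβ
      _ = Real.exp β ^ k := by rw [← Real.exp_mul, ← Real.exp_nat_mul, mul_comm]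
  calc (k : ℝ) ^ β * b k ≤ Real.exp β ^ k * (C * r ^ k / k.factorial) :=
        mul_le_mul hpow (hb k) (hb0 k) (by positivity)
    _ = C * ((Real.exp β * r) ^ k / k.factorial) := by ring

lemma norm_integral_trigPoly_mul_hermite_le (p : ℕ) {h Δ : ℝ} (hh : 0 < h) (hΔ : 0 ≤ Δ)
    (α : ℤ → ℂ) (s σ : ℝ) (k : ℕ) :
    ‖∫ y, (∑ l ∈ Finset.Icc (-(p : ℤ)) p,
          α l * cexp (I * h * l * ((s + σ * Real.sqrt Δ * y : ℝ) : ℂ))) *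
        aeval (y : ℂ) (hermite k) ∂gaussianReal 0 1‖ ≤
      h ^ k * Real.sqrt Δ ^ k * ∑ l ∈ Finset.Icc (-(p : ℤ)) p,
        ‖α l‖ * |(l : ℝ)| ^ k * |σ| ^ k * Real.exp (-(h ^ 2 * (l : ℝ) ^ 2 * σ ^ 2 * Δ) / 2) := by
  have hfreq : ∀ l : ℤ, I * h * l = I * ((h * l : ℝ) : ℂ) := fun l => by push_cast; ring
  simp only [hfreq]
  refine (norm_integral_sum_cexp_mul_hermite_le _ α _ s _ k).trans_eq ?_
  rw [Finset.mul_sum]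
  refine Finset.sum_congr rfl fun l _ => ?_
  have habs : |h * l * (σ * Real.sqrt Δ)| = h * Real.sqrt Δ * (|(l : ℝ)| * |σ|) := by
    rw [abs_mul, abs_mul, abs_mul, abs_of_pos hh, abs_of_nonneg (Real.sqrt_nonneg Δ)]
    ring
  have hsq : (h * l * (σ * Real.sqrt Δ)) ^ 2 = h ^ 2 * (l : ℝ) ^ 2 * σ ^ 2 * Δ := by
    rw [mul_pow, mul_pow, mul_pow, Real.sq_sqrt hΔ]
    ring
  rw [habs, hsq]
  ring

lemma sum_norm_mul_abs_pow_mul_exp_le (p k : ℕ) (α : ℤ → ℂ) {h Δ σ Cσ : ℝ} (hΔ : 0 ≤ Δ)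
    (hσ : |σ| ≤ Cσ) :
    ∑ l ∈ Finset.Icc (-(p : ℤ)) p,
        ‖α l‖ * |(l : ℝ)| ^ k * |σ| ^ k * Real.exp (-(h ^ 2 * (l : ℝ) ^ 2 * σ ^ 2 * Δ) / 2) ≤
      (p * Cσ) ^ k * ∑ l ∈ Finset.Icc (-(p : ℤ)) p, ‖α l‖ := by
  rw [Finset.mul_sum]
  refine Finset.sum_le_sum fun l hl => ?_
  have hl : |(l : ℝ)| ≤ p := by
    rw [Finset.mem_Icc] at hl
    exact_mod_cast abs_le.mpr hl
  have hexp : Real.exp (-(h ^ 2 * (l : ℝ) ^ 2 * σ ^ 2 * Δ) / 2) ≤ 1 := by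
    rw [Real.exp_le_one_iff, neg_div, neg_nonpos]
    positivity
  calc ‖α l‖ * |(l : ℝ)| ^ k * |σ| ^ k * Real.exp (-(h ^ 2 * (l : ℝ) ^ 2 * σ ^ 2 * Δ) / 2)
      ≤ ‖α l‖ * p ^ k * Cσ ^ k * 1 := by
        gcongr
        exact mul_nonneg (by positivity) (pow_nonneg ((abs_nonneg σ).trans hσ) k)
    _ = (p * Cσ) ^ k * ‖α l‖ := by ring

/-- Example 2: for a trigonometric polynomial v(y) = Σ_{l=-p}^{p} α_l e^{ihly} and bounded σ,
the Hermite chaos coefficients a_k(x) = (1/√k!) E[v(x + μ(x)Δ + σ(x)√Δ ξ) H_k(ξ)] satisfy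
|a_k(x)| ≤ (h^k Δ^{k/2}/√k!) Σ_l |α_l| |l|^k |σ(x)|^k e^{-h²l²σ(x)²Δ/2}, and consequently
Σ_{k≥1} k^β sup_x |a_k(x)|² < ∞ for every β > 0. -/
theorem trig_polynomial_hermite_coeff_decay (p : ℕ) (h Δ : ℝ) (hh : 0 < h) (hΔ : 0 < Δ)
    (α : ℤ → ℂ) (μ σ : ℝ → ℝ) (Cσ : ℝ) (hσ : ∀ x, |σ x| ≤ Cσ)
    (v : ℝ → ℂ)
    (hv : ∀ y : ℝ, v y =
      ∑ l ∈ Finset.Icc (-(p : ℤ)) (p : ℤ), α l * Complex.exp (Complex.I * h * l * y))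
    (a : ℕ → ℝ → ℂ)
    (ha : ∀ k : ℕ, ∀ x : ℝ, a k x =
      (1 / Real.sqrt (Nat.factorial k) : ℝ) •
        ∫ y : ℝ, v (x + μ x * Δ + σ x * Real.sqrt Δ * y) *
          (Polynomial.aeval (y : ℂ) (Polynomial.hermite k)) ∂(gaussianReal 0 1)) :
    (∀ k : ℕ, 1 ≤ k → ∀ x : ℝ,
      ‖a k x‖ ≤ (h ^ k * Real.sqrt Δ ^ k / Real.sqrt (Nat.factorial k)) *
        ∑ l ∈ Finset.Icc (-(p : ℤ)) (p : ℤ),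
          ‖α l‖ * |(l : ℝ)| ^ k * |σ x| ^ k *
            Real.exp (-(h ^ 2 * (l : ℝ) ^ 2 * (σ x) ^ 2 * Δ) / 2)) ∧
    (∀ β : ℝ, 0 < β →
      Summable (fun k : ℕ => (k : ℝ) ^ β * ⨆ x : ℝ, ‖a k x‖ ^ 2)) := by
  have hbound : ∀ k x, ‖a k x‖ ≤ (h ^ k * Real.sqrt Δ ^ k / Real.sqrt (Nat.factorial k)) *
      ∑ l ∈ Finset.Icc (-(p : ℤ)) (p : ℤ), ‖α l‖ * |(l : ℝ)| ^ k * |σ x| ^ k *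
        Real.exp (-(h ^ 2 * (l : ℝ) ^ 2 * (σ x) ^ 2 * Δ) / 2) := by
    intro k x
    rw [ha, norm_smul, Real.norm_of_nonneg (by positivity)]
    simp only [hv]
    exact (mul_le_mul_of_nonneg_left (norm_integral_trigPoly_mul_hermite_le p hh hΔ.le α _ _ k)
      (by positivity)).trans_eq (by ring)
  refine ⟨fun k _ x => hbound k x, fun β hβ => ?_⟩
  set A := ∑ l ∈ Finset.Icc (-(p : ℤ)) (p : ℤ), ‖α l‖
  set M := h * Real.sqrt Δ * (p * Cσ)
  refine summable_rpow_mul_of_le_pow_div_factorial hβ.le (A ^ 2) (M ^ 2)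
    (fun k => Real.iSup_nonneg fun x => sq_nonneg _) (fun k => ciSup_le fun x => ?_)
  have hx : ‖a k x‖ ≤ M ^ k * A / Real.sqrt (Nat.factorial k) :=
    (hbound k x).trans ((mul_le_mul_of_nonneg_left
      (sum_norm_mul_abs_pow_mul_exp_le p k α hΔ.le (hσ x)) (by positivity)).trans_eq
        (by simp only [M, mul_pow]; ring))
  calc ‖a k x‖ ^ 2 ≤ (M ^ k * A / Real.sqrt (Nat.factorial k)) ^ 2 :=
        pow_le_pow_left₀ (norm_nonneg _) hx 2
    _ = A ^ 2 * (M ^ 2) ^ k / (Nat.factorial k) := by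
        rw [div_pow, Real.sq_sqrt (by positivity)]
        ring
end
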